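/- arXiv:1508.06899 — 2 statements merged into one kernel-verified Lean document; each statement's English description precedes it below -/
import Mathlib

section
/- For every closed ctACPps+SO process term p there exists a basic term q ∈ B (a basic term of ctBPAps) such that the equation p = q is derivable from the axioms of ctACPps+SO. -/
set_option autoImplicit true
set_option maxHeartbeats 1000000

/-- The three truth values of LP→⊥: true, false, both. -/
inductive V3 : Type
  | t
  | f
  | b
  deriving DecidableEq

/-- Formulas of LP→⊥ over propositional variables of type `α`. -/
inductive Fml (α : Type) : Type
  | var : α → Fml α
  | bot : Fml α
  | neg : Fml α → Fml α
  | conj : Fml α → Fml α → Fml α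
  | disj : Fml α → Fml α → Fml α
  | imp : Fml α → Fml α → Fml α

namespace Fml

/-- ⊤ abbreviates ¬⊥. -/
def top {α : Type} : Fml α := neg bot

/-- A↔B abbreviates (A→B)∧(B→A). -/
def iff' {α : Type} (A B : Fml α) : Fml α := conj (imp A B) (imp B A)

end Fml

/-- LP→⊥ truth table for negation. -/
def negT : V3 → V3
  | .f => .t
  | .t => .f
  | .b => .b

/-- LP→⊥ truth table for conjunction. -/
def conjT : V3 → V3 → V3
  | .f, _ => .f
  | _, .f => .f
  | .t, .t => .t
  | _, _ => .b

/-- LP→⊥ truth table for disjunction. -/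
def disjT : V3 → V3 → V3
  | .t, _ => .t
  | _, .t => .t
  | .f, .f => .f
  | _, _ => .b

/-- LP→⊥ truth table for implication. -/
def impT : V3 → V3 → V3
  | .f, _ => .t
  | _, y => y

/-- The LP→⊥ valuation determined by an assignment `σ` of truth values to variables. -/
def eval {α : Type} (σ : α → V3) : Fml α → V3
  | .var x => σ x
  | .bot => .f
  | .neg A => negT (eval σ A)
  | .conj A B => conjT (eval σ A) (eval σ B)
  | .disj A B => disjT (eval σ A) (eval σ B)
  | .imp A B => impT (eval σ A) (eval σ B)

/-- Logical equivalence in LP→⊥: the same value under every valuation. -/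
def FEquiv {α : Type} (A B : Fml α) : Prop := ∀ σ : α → V3, eval σ A = eval σ B

/-- `φ ∈ [⊥]`: `φ` is logically equivalent to ⊥. -/
def EqBot {α : Type} (φ : Fml α) : Prop := ∀ σ : α → V3, eval σ φ = V3.f

/-- Semantic consequence in LP→⊥ (designated values t and b). -/
def SemCons {α : Type} (Γ : Set (Fml α)) (A : Fml α) : Prop :=
  ∀ σ : α → V3, (∀ C ∈ Γ, eval σ C ≠ V3.f) → eval σ A ≠ V3.f

/-- The Hilbert system of LP→⊥, with hypotheses `Γ`. -/
inductive Hilb {α : Type} (Γ : Set (Fml α)) : Fml α → Prop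
  | hyp {A : Fml α} : A ∈ Γ → Hilb Γ A
  | mp {A B : Fml α} : Hilb Γ (A.imp B) → Hilb Γ A → Hilb Γ B
  | ax1 (A B : Fml α) : Hilb Γ (A.imp (B.imp A))
  | ax2 (A B C : Fml α) : Hilb Γ ((A.imp (B.imp C)).imp ((A.imp B).imp (A.imp C)))
  | ax3 (A B : Fml α) : Hilb Γ (((A.imp B).imp A).imp A)
  | ax4 (A : Fml α) : Hilb Γ (Fml.bot.imp A)
  | ax5 (A B : Fml α) : Hilb Γ ((A.conj B).imp A)
  | ax6 (A B : Fml α) : Hilb Γ ((A.conj B).imp B)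
  | ax7 (A B : Fml α) : Hilb Γ (A.imp (B.imp (A.conj B)))
  | ax8 (A B : Fml α) : Hilb Γ (A.imp (A.disj B))
  | ax9 (A B : Fml α) : Hilb Γ (B.imp (A.disj B))
  | ax10 (A B C : Fml α) : Hilb Γ ((A.imp C).imp ((B.imp C).imp ((A.disj B).imp C)))
  | ax11 (A : Fml α) : Hilb Γ (Fml.iff' A.neg.neg A)
  | ax12 (A B : Fml α) : Hilb Γ (Fml.iff' (A.imp B).neg (A.conj B.neg))
  | ax13 (A B : Fml α) : Hilb Γ (Fml.iff' (A.conj B).neg (A.neg.disj B.neg))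
  | ax14 (A B : Fml α) : Hilb Γ (Fml.iff' (A.disj B).neg (A.neg.conj B.neg))
  | ax15 (A : Fml α) : Hilb Γ (A.disj A.neg)

/-- The internalization (A↔B)∧(¬A↔¬B) of logical equivalence. -/
def InternEq {α : Type} (φ ψ : Fml α) : Fml α :=
  (Fml.iff' φ ψ).conj (Fml.iff' φ.neg ψ.neg)

/-- Derivable equality of propositions: the least congruence containing the
instances of axiom IMP (φ = ψ whenever ⊢ (φ↔ψ)∧(¬φ↔¬ψ)). -/
inductive PropEq {α : Type} : Fml α → Fml α → Prop
  | imp {φ ψ} : Hilb (∅ : Set (Fml α)) (InternEq φ ψ) → PropEq φ ψ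
  | refl (φ) : PropEq φ φ
  | symm {φ ψ} : PropEq φ ψ → PropEq ψ φ
  | trans {φ ψ χ} : PropEq φ ψ → PropEq ψ χ → PropEq φ χ
  | negC {φ ψ} : PropEq φ ψ → PropEq φ.neg ψ.neg
  | conjC {φ ψ φ' ψ'} : PropEq φ ψ → PropEq φ' ψ' → PropEq (φ.conj φ') (ψ.conj ψ')
  | disjC {φ ψ φ' ψ'} : PropEq φ ψ → PropEq φ' ψ' → PropEq (φ.disj φ') (ψ.disj ψ')
  | impC {φ ψ φ' ψ'} : PropEq φ ψ → PropEq φ' ψ' → PropEq (φ.imp φ') (ψ.imp ψ')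

/-- Closed ctACPps process terms (δ is `delta`, ⊗ is `nex`, `gc`/`se` are the
guarded command and signal emission, `par` is ∥, `lm` is left merge ⌊⌊,
`cm` is communication merge |, `encap H` is ∂_H). -/
inductive SPT (α Act S : Type) : Type
  | act : Act → SPT α Act S
  | delta : SPT α Act S
  | nex : SPT α Act S
  | alt : SPT α Act S → SPT α Act S → SPT α Act S
  | seq : SPT α Act S → SPT α Act S → SPT α Act S
  | gc : Fml α → SPT α Act S → SPT α Act S
  | se : Fml α → SPT α Act S → SPT α Act S
  | par : SPT α Act S → SPT α Act S → SPT α Act S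
  | lm : SPT α Act S → SPT α Act S → SPT α Act S
  | cm : SPT α Act S → SPT α Act S → SPT α Act S
  | encap : Set Act → SPT α Act S → SPT α Act S
  | st : S → SPT α Act S → SPT α Act S

/-- The constant corresponding to an element of A ∪ {δ} (encoded as `Option Act`,
with `none` standing for δ). -/
def actd {α Act S : Type} : Option Act → SPT α Act S
  | some a => .act a
  | none => .delta

section
variable {α Act S : Type}

/-- Derivable equality from the axioms of ctACPps (γ is the communication
function on A ∪ {δ}; `a | b` in the axioms stands for γ(a,b), which is the
content of axiom `CF`): the least congruence satisfying A1-A7, NE1-NE3,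
GC1-GC7, SE1-SE8, IMP, CM1-CM9 (with CM2S, CM3S), C1-C3, D1-D4,
GC8S-GC11 and SE9-SE12. -/
inductive SDeriv (γ : Option Act → Option Act → Option Act)
    (actF : Option Act → S → Option Act) (effF : Option Act → S → S)
    (sigF : S → Fml α) :
    SPT α Act S → SPT α Act S → Prop
  | refl (p : SPT α Act S) : SDeriv γ actF effF sigF p p
  | symm {p q} : SDeriv γ actF effF sigF p q → SDeriv γ actF effF sigF q p
  | trans {p q r} : SDeriv γ actF effF sigF p q → SDeriv γ actF effF sigF q r → SDeriv γ actF effF sigF p r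
  | altC {p q p' q'} : SDeriv γ actF effF sigF p q → SDeriv γ actF effF sigF p' q' → SDeriv γ actF effF sigF (.alt p p') (.alt q q')
  | seqC {p q p' q'} : SDeriv γ actF effF sigF p q → SDeriv γ actF effF sigF p' q' → SDeriv γ actF effF sigF (.seq p p') (.seq q q')
  | gcC {φ ψ p q} : PropEq φ ψ → SDeriv γ actF effF sigF p q → SDeriv γ actF effF sigF (.gc φ p) (.gc ψ q)
  | seC {φ ψ p q} : PropEq φ ψ → SDeriv γ actF effF sigF p q → SDeriv γ actF effF sigF (.se φ p) (.se ψ q)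
  | parC {p q p' q'} : SDeriv γ actF effF sigF p q → SDeriv γ actF effF sigF p' q' → SDeriv γ actF effF sigF (.par p p') (.par q q')
  | lmC {p q p' q'} : SDeriv γ actF effF sigF p q → SDeriv γ actF effF sigF p' q' → SDeriv γ actF effF sigF (.lm p p') (.lm q q')
  | cmC {p q p' q'} : SDeriv γ actF effF sigF p q → SDeriv γ actF effF sigF p' q' → SDeriv γ actF effF sigF (.cm p p') (.cm q q')
  | encapC (H : Set Act) {p q} : SDeriv γ actF effF sigF p q → SDeriv γ actF effF sigF (.encap H p) (.encap H q)
  | stC (s : S) {p q} : SDeriv γ actF effF sigF p q →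
      SDeriv γ actF effF sigF (.st s p) (.st s q)
  | A1 (x y : SPT α Act S) : SDeriv γ actF effF sigF (.alt x y) (.alt y x)
  | A2 (x y z : SPT α Act S) : SDeriv γ actF effF sigF (.alt (.alt x y) z) (.alt x (.alt y z))
  | A3 (x : SPT α Act S) : SDeriv γ actF effF sigF (.alt x x) x
  | A4 (x y z : SPT α Act S) : SDeriv γ actF effF sigF (.seq (.alt x y) z) (.alt (.seq x z) (.seq y z))
  | A5 (x y z : SPT α Act S) : SDeriv γ actF effF sigF (.seq (.seq x y) z) (.seq x (.seq y z))
  | A6 (x : SPT α Act S) : SDeriv γ actF effF sigF (.alt x .delta) x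
  | A7 (x : SPT α Act S) : SDeriv γ actF effF sigF (.seq .delta x) .delta
  | NE1 (x : SPT α Act S) : SDeriv γ actF effF sigF (.alt x .nex) .nex
  | NE2 (x : SPT α Act S) : SDeriv γ actF effF sigF (.seq .nex x) .nex
  | NE3 (a : Option Act) : SDeriv γ actF effF sigF (.seq (actd a) .nex) (.delta : SPT α Act S)
  | GC1 (x : SPT α Act S) : SDeriv γ actF effF sigF (.gc Fml.top x) x
  | GC2 (x : SPT α Act S) : SDeriv γ actF effF sigF (.gc .bot x) .delta
  | GC3 (φ : Fml α) : SDeriv γ actF effF sigF (.gc φ .delta) (.delta : SPT α Act S)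
  | GC4 (φ : Fml α) (x y : SPT α Act S) :
      SDeriv γ actF effF sigF (.gc φ (.alt x y)) (.alt (.gc φ x) (.gc φ y))
  | GC5 (φ : Fml α) (x y : SPT α Act S) : SDeriv γ actF effF sigF (.gc φ (.seq x y)) (.seq (.gc φ x) y)
  | GC6 (φ ψ : Fml α) (x : SPT α Act S) : SDeriv γ actF effF sigF (.gc φ (.gc ψ x)) (.gc (φ.conj ψ) x)
  | GC7 (φ ψ : Fml α) (x : SPT α Act S) :
      SDeriv γ actF effF sigF (.gc (φ.disj ψ) x) (.alt (.gc φ x) (.gc ψ x))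
  | SE1 (x : SPT α Act S) : SDeriv γ actF effF sigF (.se Fml.top x) x
  | SE2 (x : SPT α Act S) : SDeriv γ actF effF sigF (.se .bot x) .nex
  | SE3 (φ : Fml α) : SDeriv γ actF effF sigF (.se φ .nex) (.nex : SPT α Act S)
  | SE4 (φ : Fml α) (x y : SPT α Act S) : SDeriv γ actF effF sigF (.alt (.se φ x) y) (.se φ (.alt x y))
  | SE5 (φ : Fml α) (x y : SPT α Act S) : SDeriv γ actF effF sigF (.seq (.se φ x) y) (.se φ (.seq x y))
  | SE6 (φ ψ : Fml α) (x : SPT α Act S) : SDeriv γ actF effF sigF (.se φ (.se ψ x)) (.se (φ.conj ψ) x)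
  | SE7 (φ : Fml α) (x : SPT α Act S) : SDeriv γ actF effF sigF (.se φ (.gc φ x)) (.se φ x)
  | SE8 (φ ψ : Fml α) (x : SPT α Act S) :
      SDeriv γ actF effF sigF (.gc φ (.se ψ x)) (.se (φ.imp ψ) (.gc φ x))
  | CM1 (x y : SPT α Act S) :
      SDeriv γ actF effF sigF (.par x y) (.alt (.alt (.lm x y) (.lm y x)) (.cm x y))
  | CM2S (a : Option Act) (x : SPT α Act S) :
      SDeriv γ actF effF sigF (.lm (actd a) x) (.alt (.seq (actd a) x) (.encap Set.univ x))
  | CM3S (a : Option Act) (x y : SPT α Act S) :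
      SDeriv γ actF effF sigF (.lm (.seq (actd a) x) y)
        (.alt (.seq (actd a) (.par x y)) (.encap Set.univ y))
  | CM4 (x y z : SPT α Act S) : SDeriv γ actF effF sigF (.lm (.alt x y) z) (.alt (.lm x z) (.lm y z))
  | CM5 (a b : Option Act) (x : SPT α Act S) :
      SDeriv γ actF effF sigF (.cm (.seq (actd a) x) (actd b)) (.seq (actd (γ a b)) x)
  | CM6 (a b : Option Act) (x : SPT α Act S) :
      SDeriv γ actF effF sigF (.cm (actd a) (.seq (actd b) x)) (.seq (actd (γ a b)) x)
  | CM7 (a b : Option Act) (x y : SPT α Act S) :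
      SDeriv γ actF effF sigF (.cm (.seq (actd a) x) (.seq (actd b) y)) (.seq (actd (γ a b)) (.par x y))
  | CM8 (x y z : SPT α Act S) : SDeriv γ actF effF sigF (.cm (.alt x y) z) (.alt (.cm x z) (.cm y z))
  | CM9 (x y z : SPT α Act S) : SDeriv γ actF effF sigF (.cm x (.alt y z)) (.alt (.cm x y) (.cm x z))
  | CF (a b : Option Act) : SDeriv γ actF effF sigF (.cm (actd a) (actd b)) (actd (γ a b) : SPT α Act S)
  | C1 (a b : Option Act) :
      SDeriv γ actF effF sigF (.cm (actd a) (actd b)) (.cm (actd b) (actd a) : SPT α Act S)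
  | C2 (a b c : Option Act) :
      SDeriv γ actF effF sigF (.cm (.cm (actd a) (actd b)) (actd c))
        (.cm (actd a) (.cm (actd b) (actd c)) : SPT α Act S)
  | C3 (a : Option Act) : SDeriv γ actF effF sigF (.cm .delta (actd a)) (.delta : SPT α Act S)
  | D1 (H : Set Act) (a : Act) : a ∉ H → SDeriv γ actF effF sigF (.encap H (.act a)) (.act a)
  | D1d (H : Set Act) : SDeriv γ actF effF sigF (.encap H (.delta : SPT α Act S)) .delta
  | D2 (H : Set Act) (a : Act) : a ∈ H → SDeriv γ actF effF sigF (.encap H (.act a)) .delta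
  | D3 (H : Set Act) (x y : SPT α Act S) :
      SDeriv γ actF effF sigF (.encap H (.alt x y)) (.alt (.encap H x) (.encap H y))
  | D4 (H : Set Act) (x y : SPT α Act S) :
      SDeriv γ actF effF sigF (.encap H (.seq x y)) (.seq (.encap H x) (.encap H y))
  | GC8S (φ : Fml α) (x y : SPT α Act S) :
      SDeriv γ actF effF sigF (.lm (.gc φ x) y) (.alt (.gc φ (.lm x y)) (.encap Set.univ y))
  | GC9S (φ : Fml α) (x y : SPT α Act S) :
      SDeriv γ actF effF sigF (.cm (.gc φ x) y) (.alt (.gc φ (.cm x y)) (.encap Set.univ y))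
  | GC10S (φ : Fml α) (x y : SPT α Act S) :
      SDeriv γ actF effF sigF (.cm x (.gc φ y)) (.alt (.gc φ (.cm x y)) (.encap Set.univ x))
  | GC11 (H : Set Act) (φ : Fml α) (x : SPT α Act S) :
      SDeriv γ actF effF sigF (.encap H (.gc φ x)) (.gc φ (.encap H x))
  | SE9 (φ : Fml α) (x y : SPT α Act S) : SDeriv γ actF effF sigF (.lm (.se φ x) y) (.se φ (.lm x y))
  | SE10 (φ : Fml α) (x y : SPT α Act S) : SDeriv γ actF effF sigF (.cm (.se φ x) y) (.se φ (.cm x y))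
  | SE11 (φ : Fml α) (x y : SPT α Act S) : SDeriv γ actF effF sigF (.cm x (.se φ y)) (.se φ (.cm x y))
  | SE12 (H : Set Act) (φ : Fml α) (x : SPT α Act S) :
      SDeriv γ actF effF sigF (.encap H (.se φ x)) (.se φ (.encap H x))
  | SO1 (a : Option Act) (s : S) :
      SDeriv γ actF effF sigF (.st s (actd a)) (.se (sigF s) (actd (actF a s)))
  | SO2 (a : Option Act) (s : S) (x : SPT α Act S) :
      SDeriv γ actF effF sigF (.st s (.seq (actd a) x))
        (.se (sigF s) (.seq (actd (actF a s)) (.st (effF a s) x)))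
  | SO3 (s : S) (x y : SPT α Act S) :
      SDeriv γ actF effF sigF (.st s (.alt x y)) (.alt (.st s x) (.st s y))
  | SO4 (s : S) (φ : Fml α) (x : SPT α Act S) :
      SDeriv γ actF effF sigF (.st s (.gc φ x)) (.se (sigF s) (.gc φ (.st s x)))
  | SO5 (s : S) (φ : Fml α) (x : SPT α Act S) :
      SDeriv γ actF effF sigF (.st s (.se φ x)) (.se φ (.st s x))

/-- Basic terms (basic terms of ctBPAps, within the ctACPps syntax). -/
inductive SBasic : SPT α Act S → Prop
  | nex : SBasic (.nex : SPT α Act S)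
  | emiDelta {φ : Fml α} : ¬ EqBot φ → SBasic (.se φ .delta)
  | gcAct {φ : Fml α} (a : Act) : ¬ EqBot φ → SBasic (.gc φ (.act a))
  | gcSeq {φ : Fml α} (a : Act) {p : SPT α Act S} :
      ¬ EqBot φ → SBasic p → SBasic (.gc φ (.seq (.act a) p))
  | alt {p q : SPT α Act S} : SBasic p → SBasic q → SBasic (.alt p q)

/-- The signal (root signal) emitted by a process term. -/
def sigS (sigF : S → Fml α) : SPT α Act S → Fml α
  | .act _ => Fml.top
  | .delta => Fml.top
  | .nex => .bot
  | .alt p q => (sigS sigF p).conj (sigS sigF q)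
  | .seq p _ => sigS sigF p
  | .gc φ p => φ.imp (sigS sigF p)
  | .se φ p => φ.conj (sigS sigF p)
  | .par p q => (sigS sigF p).conj (sigS sigF q)
  | .lm p q => (sigS sigF p).conj (sigS sigF q)
  | .cm p q => (sigS sigF p).conj (sigS sigF q)
  | .encap _ p => sigS sigF p
  | .st s p => (sigS sigF p).conj (sigF s)

/-- The structural operational semantics of ctACPps: `STr γ actF effF sigF p φ a (some q)` is the
action step p –φ,a→ q and `STr γ actF effF sigF p φ a none` is the action termination p –φ,a→ √. -/
inductive STr (γ : Option Act → Option Act → Option Act)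
    (actF : Option Act → S → Option Act) (effF : Option Act → S → S)
    (sigF : S → Fml α) :
    SPT α Act S → Fml α → Act → Option (SPT α Act S) → Prop
  | act (a : Act) : STr γ actF effF sigF (.act a) Fml.top a none
  | altL {x φ a o} (y : SPT α Act S) :
      STr γ actF effF sigF x φ a o → ¬ EqBot (sigS sigF (SPT.alt x y)) → STr γ actF effF sigF (.alt x y) φ a o
  | altR {y φ a o} (x : SPT α Act S) :
      STr γ actF effF sigF y φ a o → ¬ EqBot (sigS sigF (SPT.alt x y)) → STr γ actF effF sigF (.alt x y) φ a o
  | seqT {x φ a} (y : SPT α Act S) :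
      STr γ actF effF sigF x φ a none → ¬ EqBot (sigS sigF y) → STr γ actF effF sigF (.seq x y) φ a (some y)
  | seqS {x φ a x'} (y : SPT α Act S) :
      STr γ actF effF sigF x φ a (some x') → STr γ actF effF sigF (.seq x y) φ a (some (.seq x' y))
  | gcR {x φ a o} (ψ : Fml α) :
      STr γ actF effF sigF x φ a o → ¬ EqBot (φ.conj ψ) → STr γ actF effF sigF (.gc ψ x) (φ.conj ψ) a o
  | seR {x φ a o} (ψ : Fml α) :
      STr γ actF effF sigF x φ a o → ¬ EqBot (sigS sigF (SPT.se ψ x)) → STr γ actF effF sigF (.se ψ x) φ a o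
  | parTL {x φ a} (y : SPT α Act S) :
      STr γ actF effF sigF x φ a none → ¬ EqBot (sigS sigF (SPT.par x y)) → ¬ EqBot (sigS sigF y) →
      STr γ actF effF sigF (.par x y) φ a (some y)
  | parTR (x : SPT α Act S) {y φ a} :
      STr γ actF effF sigF y φ a none → ¬ EqBot (sigS sigF (SPT.par x y)) → ¬ EqBot (sigS sigF x) →
      STr γ actF effF sigF (.par x y) φ a (some x)
  | parSL {x φ a x'} (y : SPT α Act S) :
      STr γ actF effF sigF x φ a (some x') → ¬ EqBot (sigS sigF (SPT.par x y)) →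
      ¬ EqBot (sigS sigF (SPT.par x' y)) → STr γ actF effF sigF (.par x y) φ a (some (.par x' y))
  | parSR (x : SPT α Act S) {y φ a y'} :
      STr γ actF effF sigF y φ a (some y') → ¬ EqBot (sigS sigF (SPT.par x y)) →
      ¬ EqBot (sigS sigF (SPT.par x y')) → STr γ actF effF sigF (.par x y) φ a (some (.par x y'))
  | parCTT {x y : SPT α Act S} {φ ψ a b c} :
      STr γ actF effF sigF x φ a none → STr γ actF effF sigF y ψ b none → γ (some a) (some b) = some c →
      ¬ EqBot (φ.conj ψ) → ¬ EqBot (sigS sigF (SPT.par x y)) →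
      STr γ actF effF sigF (.par x y) (φ.conj ψ) c none
  | parCTS {x y : SPT α Act S} {φ ψ a b c y'} :
      STr γ actF effF sigF x φ a none → STr γ actF effF sigF y ψ b (some y') → γ (some a) (some b) = some c →
      ¬ EqBot (φ.conj ψ) → ¬ EqBot (sigS sigF (SPT.par x y)) →
      STr γ actF effF sigF (.par x y) (φ.conj ψ) c (some y')
  | parCST {x y : SPT α Act S} {φ ψ a b c x'} :
      STr γ actF effF sigF x φ a (some x') → STr γ actF effF sigF y ψ b none → γ (some a) (some b) = some c →
      ¬ EqBot (φ.conj ψ) → ¬ EqBot (sigS sigF (SPT.par x y)) →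
      STr γ actF effF sigF (.par x y) (φ.conj ψ) c (some x')
  | parCSS {x y : SPT α Act S} {φ ψ a b c x' y'} :
      STr γ actF effF sigF x φ a (some x') → STr γ actF effF sigF y ψ b (some y') → γ (some a) (some b) = some c →
      ¬ EqBot (φ.conj ψ) → ¬ EqBot (sigS sigF (SPT.par x y)) →
      ¬ EqBot (sigS sigF (SPT.par x' y')) →
      STr γ actF effF sigF (.par x y) (φ.conj ψ) c (some (.par x' y'))
  | lmT {x φ a} (y : SPT α Act S) :
      STr γ actF effF sigF x φ a none → ¬ EqBot (sigS sigF (SPT.lm x y)) → ¬ EqBot (sigS sigF y) →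
      STr γ actF effF sigF (.lm x y) φ a (some y)
  | lmS {x φ a x'} (y : SPT α Act S) :
      STr γ actF effF sigF x φ a (some x') → ¬ EqBot (sigS sigF (SPT.lm x y)) →
      ¬ EqBot (sigS sigF (SPT.par x' y)) → STr γ actF effF sigF (.lm x y) φ a (some (.par x' y))
  | cmTT {x y : SPT α Act S} {φ ψ a b c} :
      STr γ actF effF sigF x φ a none → STr γ actF effF sigF y ψ b none → γ (some a) (some b) = some c →
      ¬ EqBot (φ.conj ψ) → ¬ EqBot (sigS sigF (SPT.cm x y)) →
      STr γ actF effF sigF (.cm x y) (φ.conj ψ) c none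
  | cmTS {x y : SPT α Act S} {φ ψ a b c y'} :
      STr γ actF effF sigF x φ a none → STr γ actF effF sigF y ψ b (some y') → γ (some a) (some b) = some c →
      ¬ EqBot (φ.conj ψ) → ¬ EqBot (sigS sigF (SPT.cm x y)) →
      STr γ actF effF sigF (.cm x y) (φ.conj ψ) c (some y')
  | cmST {x y : SPT α Act S} {φ ψ a b c x'} :
      STr γ actF effF sigF x φ a (some x') → STr γ actF effF sigF y ψ b none → γ (some a) (some b) = some c →
      ¬ EqBot (φ.conj ψ) → ¬ EqBot (sigS sigF (SPT.cm x y)) →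
      STr γ actF effF sigF (.cm x y) (φ.conj ψ) c (some x')
  | cmSS {x y : SPT α Act S} {φ ψ a b c x' y'} :
      STr γ actF effF sigF x φ a (some x') → STr γ actF effF sigF y ψ b (some y') → γ (some a) (some b) = some c →
      ¬ EqBot (φ.conj ψ) → ¬ EqBot (sigS sigF (SPT.cm x y)) →
      ¬ EqBot (sigS sigF (SPT.par x' y')) →
      STr γ actF effF sigF (.cm x y) (φ.conj ψ) c (some (.par x' y'))
  | encapR {x φ a o} (H : Set Act) :
      STr γ actF effF sigF x φ a o → a ∉ H →
      STr γ actF effF sigF (.encap H x) φ a (Option.map (SPT.encap H) o)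
  | stT {x φ a a'} (s : S) :
      STr γ actF effF sigF x φ a none → actF (some a) s = some a' →
      ¬ EqBot (sigS sigF (SPT.st s x)) →
      STr γ actF effF sigF (.st s x) φ a' none
  | stS {x φ a a' x'} (s : S) :
      STr γ actF effF sigF x φ a (some x') → actF (some a) s = some a' →
      ¬ EqBot (sigS sigF (SPT.st s x)) →
      ¬ EqBot (sigS sigF (SPT.st (effF (some a) s) x')) →
      STr γ actF effF sigF (.st s x) φ a' (some (.st (effF (some a) s) x'))

/-- Lift a relation on process terms to their optional (√-extended) targets. -/
def SOptR (R : SPT α Act S → SPT α Act S → Prop) :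
    Option (SPT α Act S) → Option (SPT α Act S) → Prop
  | none, none => True
  | some p, some q => R p q
  | _, _ => False

/-- The (one-directional) simulation conditions of a splitting bisimulation. -/
def SSim (γ : Option Act → Option Act → Option Act)
    (actF : Option Act → S → Option Act) (effF : Option Act → S → S)
    (sigF : S → Fml α)
    (R : SPT α Act S → SPT α Act S → Prop) (p q : SPT α Act S) : Prop :=
  (∀ φ a o, STr γ actF effF sigF p φ a o →
    ∀ σ : α → V3, eval σ (sigS sigF p) ≠ V3.f → eval σ φ ≠ V3.f →
      ∃ ψ o', eval σ ψ = eval σ φ ∧ STr γ actF effF sigF q ψ a o' ∧ SOptR R o o') ∧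
  FEquiv (sigS sigF p) (sigS sigF q)

/-- `R` is a bisimulation. -/
def SIsBisim (γ : Option Act → Option Act → Option Act)
    (actF : Option Act → S → Option Act) (effF : Option Act → S → S)
    (sigF : S → Fml α)
    (R : SPT α Act S → SPT α Act S → Prop) : Prop :=
  ∀ p q, R p q → SSim γ actF effF sigF R p q ∧
    SSim γ actF effF sigF (fun u v => R v u) q p

/-- Bisimulation equivalence. -/
def SBisim (γ : Option Act → Option Act → Option Act)
    (actF : Option Act → S → Option Act) (effF : Option Act → S → S)
    (sigF : S → Fml α) (p q : SPT α Act S) : Prop :=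
  ∃ R, SIsBisim γ actF effF sigF R ∧ R p q

end

/-!
Each operator is eliminated from basic arguments by induction on the basic term: the axioms
distribute it over `+`, move signal emissions and guarded commands outwards, and resolve it on the
summands `⊗`, `φ ⌃ δ`, `φ :→ a` and `φ :→ a · p`. A condition `φ ∈ [⊥]` makes a summand collapse to
`δ` or `⊗`, because weak completeness of the Hilbert system for LP→⊥ (Kalmár's argument over the
finitely many atoms) turns `φ = ⊥` into an instance of IMP. The merges `∥`, `⌊⌊` and `|` are handled
together by induction on the total size of the arguments, as CM3S and CM7 only produce merges of
strictly smaller basic terms.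
-/

/-- `X → ⊥` is designated exactly when `X` is false, so `X.hasValue v` is designated exactly
when `X` takes the value `v`. -/
def Fml.hasValue {α : Type} (X : Fml α) : V3 → Fml α
  | .t => X.conj (X.neg.imp .bot)
  | .b => X.conj X.neg
  | .f => X.neg.conj (X.imp .bot)

namespace Hilb

variable {α : Type} {Γ Δ : Set (Fml α)} {A B C : Fml α}

theorem mono (hΓΔ : Γ ⊆ Δ) (h : Hilb Γ A) : Hilb Δ A := by
  induction h with
  | hyp hA => exact .hyp (hΓΔ hA)
  | mp _ _ ih₁ ih₂ => exact .mp ih₁ ih₂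
  | ax1 A B => exact .ax1 A B
  | ax2 A B C => exact .ax2 A B C
  | ax3 A B => exact .ax3 A B
  | ax4 A => exact .ax4 A
  | ax5 A B => exact .ax5 A B
  | ax6 A B => exact .ax6 A B
  | ax7 A B => exact .ax7 A B
  | ax8 A B => exact .ax8 A B
  | ax9 A B => exact .ax9 A B
  | ax10 A B C => exact .ax10 A B C
  | ax11 A => exact .ax11 A
  | ax12 A B => exact .ax12 A B
  | ax13 A B => exact .ax13 A B
  | ax14 A B => exact .ax14 A B
  | ax15 A => exact .ax15 A

theorem weaken (h : Hilb Γ B) : Hilb (insert A Γ) B :=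
  h.mono (Set.subset_insert _ _)

theorem hyp_insert : Hilb (insert A Γ) A :=
  .hyp (Set.mem_insert _ _)

theorem imp_self (A : Fml α) : Hilb Γ (A.imp A) :=
  .mp (.mp (.ax2 A (A.imp A) A) (.ax1 A (A.imp A))) (.ax1 A A)

theorem imp_intro (h : Hilb Γ B) : Hilb Γ (A.imp B) :=
  .mp (.ax1 _ _) h

theorem deduction (h : Hilb (insert A Γ) B) : Hilb Γ (A.imp B) := by
  induction h with
  | hyp hC =>
    rcases hC with rfl | hC
    · exact imp_self _
    · exact imp_intro (.hyp hC)
  | mp _ _ ih₁ ih₂ => exact .mp (.mp (.ax2 _ _ _) ih₁) ih₂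
  | ax1 A B => exact imp_intro (.ax1 A B)
  | ax2 A B C => exact imp_intro (.ax2 A B C)
  | ax3 A B => exact imp_intro (.ax3 A B)
  | ax4 A => exact imp_intro (.ax4 A)
  | ax5 A B => exact imp_intro (.ax5 A B)
  | ax6 A B => exact imp_intro (.ax6 A B)
  | ax7 A B => exact imp_intro (.ax7 A B)
  | ax8 A B => exact imp_intro (.ax8 A B)
  | ax9 A B => exact imp_intro (.ax9 A B)
  | ax10 A B C => exact imp_intro (.ax10 A B C)
  | ax11 A => exact imp_intro (.ax11 A)
  | ax12 A B => exact imp_intro (.ax12 A B)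
  | ax13 A B => exact imp_intro (.ax13 A B)
  | ax14 A B => exact imp_intro (.ax14 A B)
  | ax15 A => exact imp_intro (.ax15 A)

theorem imp_trans (h₁ : Hilb Γ (A.imp B)) (h₂ : Hilb Γ (B.imp C)) : Hilb Γ (A.imp C) :=
  .mp (.mp (.ax2 A B C) (imp_intro h₂)) h₁

theorem conj_intro (hA : Hilb Γ A) (hB : Hilb Γ B) : Hilb Γ (A.conj B) :=
  .mp (.mp (.ax7 A B) hA) hB

theorem conj_left (h : Hilb Γ (A.conj B)) : Hilb Γ A := .mp (.ax5 A B) h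

theorem conj_right (h : Hilb Γ (A.conj B)) : Hilb Γ B := .mp (.ax6 A B) h

theorem disj_left (B : Fml α) (h : Hilb Γ A) : Hilb Γ (A.disj B) := .mp (.ax8 A B) h

theorem disj_right (A : Fml α) (h : Hilb Γ B) : Hilb Γ (A.disj B) := .mp (.ax9 A B) h

theorem disj_elim (h : Hilb Γ (A.disj B)) (hA : Hilb (insert A Γ) C)
    (hB : Hilb (insert B Γ) C) : Hilb Γ C :=
  .mp (.mp (.mp (.ax10 A B C) hA.deduction) hB.deduction) h

theorem iff_mp (h : Hilb Γ (Fml.iff' A B)) (hA : Hilb Γ A) : Hilb Γ B := .mp h.conj_left hA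

theorem iff_mpr (h : Hilb Γ (Fml.iff' A B)) (hB : Hilb Γ B) : Hilb Γ A := .mp h.conj_right hB

theorem neg_bot : Hilb Γ (Fml.bot : Fml α).neg :=
  disj_elim (.ax15 .bot) (.mp (.ax4 _) hyp_insert) hyp_insert

theorem imp_bot_or_self (A : Fml α) : Hilb Γ ((A.imp .bot).disj A) :=
  disj_elim (.ax15 (A.imp .bot)) (disj_left _ hyp_insert)
    (disj_right _ (iff_mp (.ax12 A .bot) hyp_insert).conj_left)

theorem hasValue_trichotomy (X : Fml α) :
    Hilb Γ ((X.hasValue .t).disj ((X.hasValue .b).disj (X.hasValue .f))) := by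
  have hX : Hilb (insert X Γ) X := hyp_insert
  have hnX : Hilb (insert X.neg Γ) X.neg := hyp_insert
  refine disj_elim (.ax15 X) ?_ ?_
  · refine disj_elim (imp_bot_or_self X.neg) ?_ ?_
    · exact disj_left _ (conj_intro hX.weaken hyp_insert)
    · exact disj_right _ (disj_left _ (conj_intro hX.weaken hyp_insert))
  · refine disj_elim (imp_bot_or_self X) ?_ ?_
    · exact disj_right _ (disj_right _ (conj_intro hnX.weaken hyp_insert))
    · exact disj_right _ (disj_left _ (conj_intro hyp_insert hnX.weaken))

def Settles (Γ : Set (Fml α)) (σ : α → V3) (X : Fml α) : Prop :=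
  (eval σ X ≠ .f → Hilb Γ X) ∧ (eval σ X = .f → Hilb Γ (X.imp .bot))

variable {σ : α → V3}

theorem settles_var {x : α} (hx : (Fml.var x).hasValue (σ x) ∈ Γ) :
    Settles Γ σ (.var x) ∧ Settles Γ σ (Fml.var x).neg := by
  have h := Hilb.hyp hx
  unfold Settles
  rcases hv : σ x <;> simp only [hv, Fml.hasValue] at h <;>
    simp [eval, hv, negT, h.conj_left, h.conj_right]

theorem settles_bot : Settles Γ σ .bot ∧ Settles Γ σ (Fml.bot : Fml α).neg := by
  simp [Settles, eval, negT, imp_self, neg_bot]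

theorem settles_neg (hA : Settles Γ σ A ∧ Settles Γ σ A.neg) :
    Settles Γ σ A.neg ∧ Settles Γ σ A.neg.neg := by
  obtain ⟨⟨a₁, a₂⟩, a₃, a₄⟩ := hA
  unfold Settles
  rcases hu : eval σ A <;> simp [eval, hu, negT] at * <;> and_intros
  all_goals first
    | assumption
    | exact iff_mpr (ax11 A) ‹_›
    | exact imp_trans (ax11 A).conj_left ‹_›

theorem settles_conj (hA : Settles Γ σ A ∧ Settles Γ σ A.neg)
    (hB : Settles Γ σ B ∧ Settles Γ σ B.neg) :
    Settles Γ σ (A.conj B) ∧ Settles Γ σ (A.conj B).neg := by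
  obtain ⟨⟨a₁, a₂⟩, a₃, a₄⟩ := hA
  obtain ⟨⟨b₁, b₂⟩, b₃, b₄⟩ := hB
  unfold Settles
  rcases hu : eval σ A <;> rcases hv : eval σ B <;> simp [eval, hu, hv, negT, conjT] at * <;>
    and_intros
  all_goals first
    | exact conj_intro a₁ b₁
    | exact imp_trans (ax5 A B) a₂
    | exact imp_trans (ax6 A B) b₂
    | exact iff_mpr (ax13 A B) (disj_left _ a₃)
    | exact iff_mpr (ax13 A B) (disj_right _ b₃)
    | exact imp_trans (ax13 A B).conj_left (.mp (.mp (ax10 _ _ _) a₄) b₄)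

theorem settles_disj (hA : Settles Γ σ A ∧ Settles Γ σ A.neg)
    (hB : Settles Γ σ B ∧ Settles Γ σ B.neg) :
    Settles Γ σ (A.disj B) ∧ Settles Γ σ (A.disj B).neg := by
  obtain ⟨⟨a₁, a₂⟩, a₃, a₄⟩ := hA
  obtain ⟨⟨b₁, b₂⟩, b₃, b₄⟩ := hB
  unfold Settles
  rcases hu : eval σ A <;> rcases hv : eval σ B <;> simp [eval, hu, hv, negT, disjT] at * <;>
    and_intros
  all_goals first
    | exact disj_left _ a₁
    | exact disj_right _ b₁
    | exact .mp (.mp (ax10 A B _) a₂) b₂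
    | exact iff_mpr (ax14 A B) (conj_intro a₃ b₃)
    | exact imp_trans (ax14 A B).conj_left (imp_trans (ax5 _ _) a₄)
    | exact imp_trans (ax14 A B).conj_left (imp_trans (ax6 _ _) b₄)

theorem settles_imp (hA : Settles Γ σ A ∧ Settles Γ σ A.neg)
    (hB : Settles Γ σ B ∧ Settles Γ σ B.neg) :
    Settles Γ σ (A.imp B) ∧ Settles Γ σ (A.imp B).neg := by
  obtain ⟨⟨a₁, a₂⟩, a₃, a₄⟩ := hA
  obtain ⟨⟨b₁, b₂⟩, b₃, b₄⟩ := hB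
  unfold Settles
  rcases hu : eval σ A <;> rcases hv : eval σ B <;> simp [eval, hu, hv, negT, impT] at * <;>
    and_intros
  all_goals first
    | exact imp_trans a₂ (ax4 B)
    | exact imp_intro b₁
    | exact deduction (.mp b₂.weaken (.mp hyp_insert a₁.weaken))
    | exact iff_mpr (ax12 A B) (conj_intro a₁ b₃)
    | exact imp_trans (ax12 A B).conj_left (imp_trans (ax5 _ _) a₂)
    | exact imp_trans (ax12 A B).conj_left (imp_trans (ax6 _ _) b₄)

theorem settles_of_hasValue (hΓ : ∀ x, (Fml.var x).hasValue (σ x) ∈ Γ) (A : Fml α) :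
    Settles Γ σ A ∧ Settles Γ σ A.neg := by
  induction A with
  | var x => exact settles_var (hΓ x)
  | bot => exact settles_bot
  | neg A ih => exact settles_neg ih
  | conj A B ihA ihB => exact settles_conj ihA ihB
  | disj A B ihA ihB => exact settles_disj ihA ihB
  | imp A B ihA ihB => exact settles_imp ihA ihB


theorem of_forall_hasValue (s : Finset α)
    (h : ∀ σ : α → V3, Hilb ((fun x => (Fml.var x).hasValue (σ x)) '' s) A) :
    Hilb ∅ A := by
  classical
  induction s using Finset.induction_on with
  | empty => simpa using h fun _ => .t
  | insert x s hx ih =>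
    refine ih fun σ => ?_
    have key : ∀ v : V3, Hilb (insert ((Fml.var x).hasValue v)
        ((fun y => (Fml.var y).hasValue (σ y)) '' s)) A := by
      intro v
      convert h (Function.update σ x v) using 1
      rw [Finset.coe_insert, Set.image_insert_eq, Function.update_self]
      congr 1
      refine Set.image_congr fun y hy => ?_
      rw [Function.update_of_ne (ne_of_mem_of_not_mem hy hx)]
    refine disj_elim (hasValue_trichotomy _) (key .t) (disj_elim hyp_insert ?_ ?_)
    · exact (key .b).mono (Set.insert_subset_insert (Set.subset_insert _ _))
    · exact (key .f).mono (Set.insert_subset_insert (Set.subset_insert _ _))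

theorem complete [Fintype α] (h : ∀ σ : α → V3, eval σ A ≠ .f) : Hilb ∅ A :=
  of_forall_hasValue Finset.univ fun σ =>
    (settles_of_hasValue (fun x => Set.mem_image_of_mem _ (Finset.mem_coe.2 (Finset.mem_univ x)))
      A).1.1 (h σ)

end Hilb

theorem PropEq.bot_of_eqBot {α : Type} [Fintype α] {φ : Fml α} (h : EqBot φ) :
    PropEq φ .bot :=
  .imp <| Hilb.complete fun σ => by
    simp [InternEq, Fml.iff', eval, h σ, negT, conjT, impT]

theorem Fml.top_not_eqBot {α : Type} : ¬ EqBot (Fml.top : Fml α) := by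
  intro h
  simpa [eval, Fml.top, negT] using h fun _ => .t

def SPT.size {α Act S : Type} : SPT α Act S → ℕ
  | .act _ => 1
  | .delta => 1
  | .nex => 1
  | .alt p q => p.size + q.size + 1
  | .seq p q => p.size + q.size + 1
  | .gc _ p => p.size + 1
  | .se _ p => p.size + 1
  | .par p q => p.size + q.size + 1
  | .lm p q => p.size + q.size + 1
  | .cm p q => p.size + q.size + 1
  | .encap _ p => p.size + 1
  | .st _ p => p.size + 1

section Elimination

variable {α Act S : Type} {γ : Option Act → Option Act → Option Act}
  {actF : Option Act → S → Option Act} {effF : Option Act → S → S} {sigF : S → Fml α}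
  {φ : Fml α} {p q x : SPT α Act S}

def HasBasicForm (γ : Option Act → Option Act → Option Act) (actF : Option Act → S → Option Act)
    (effF : Option Act → S → S) (sigF : S → Fml α) (p : SPT α Act S) : Prop :=
  ∃ q, SBasic q ∧ SDeriv γ actF effF sigF p q

local notation "HasBF" => HasBasicForm γ actF effF sigF
local infix:50 " ≋ " => SDeriv γ actF effF sigF

theorem SBasic.hasBasicForm (hp : SBasic p) : HasBF p := ⟨p, hp, .refl p⟩

namespace HasBasicForm

theorem of_deriv (h : p ≋ q) (hq : HasBF q) : HasBF p :=
  let ⟨r, hr, hqr⟩ := hq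
  ⟨r, hr, h.trans hqr⟩

theorem alt (hp : HasBF p) (hq : HasBF q) : HasBF (.alt p q) :=
  let ⟨r, hr, hpr⟩ := hp
  let ⟨r', hr', hqr'⟩ := hq
  ⟨.alt r r', .alt hr hr', .altC hpr hqr'⟩

theorem map (f : SPT α Act S → SPT α Act S) (hf : ∀ {p q}, p ≋ q → f p ≋ f q)
    (hbasic : ∀ {p}, SBasic p → HasBF (f p)) (hp : HasBF p) : HasBF (f p) :=
  let ⟨_, hr, hpr⟩ := hp
  (hbasic hr).of_deriv (hf hpr)

theorem map₂ (f : SPT α Act S → SPT α Act S → SPT α Act S)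
    (hf : ∀ {p q p' q'}, p ≋ q → p' ≋ q' → f p p' ≋ f q q')
    (hbasic : ∀ {p q}, SBasic p → SBasic q → HasBF (f p q)) (hp : HasBF p) (hq : HasBF q) :
    HasBF (f p q) :=
  let ⟨_, hr, hpr⟩ := hp
  let ⟨_, hr', hqr'⟩ := hq
  (hbasic hr hr').of_deriv (hf hpr hqr')

end HasBasicForm

theorem hasBasicForm_nex : HasBF (.nex : SPT α Act S) := SBasic.nex.hasBasicForm

theorem hasBasicForm_delta : HasBF (.delta : SPT α Act S) :=
  ⟨.se .top .delta, .emiDelta Fml.top_not_eqBot, (SDeriv.SE1 _).symm⟩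

theorem hasBasicForm_actd (a : Option Act) : HasBF (actd a : SPT α Act S) := by
  cases a with
  | none => exact hasBasicForm_delta
  | some a => exact ⟨.gc .top (.act a), .gcAct a Fml.top_not_eqBot, (SDeriv.GC1 _).symm⟩

theorem hasBasicForm_act_seq (a : Act) (hp : HasBF p) : HasBF (.seq (.act a) p) :=
  hp.map (fun x => .seq (.act a) x) (SDeriv.seqC (.refl _))
    fun hr => ⟨_, .gcSeq a Fml.top_not_eqBot hr, (SDeriv.GC1 _).symm⟩

theorem hasBasicForm_encap_act (H : Set Act) (a : Act) :
    HasBF (.encap H (.act a : SPT α Act S)) := by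
  by_cases ha : a ∈ H
  · exact hasBasicForm_delta.of_deriv (.D2 H a ha)
  · exact (hasBasicForm_actd (some a)).of_deriv (.D1 H a ha)

variable (γ actF effF sigF) in
def ParBasicBelow (n : ℕ) : Prop :=
  ∀ u v : SPT α Act S, SBasic u → SBasic v → u.size + v.size < n → HasBF (.par u v)

theorem ParBasicBelow.mono {m n : ℕ} (h : ParBasicBelow γ actF effF sigF n) (hmn : m ≤ n) :
    ParBasicBelow γ actF effF sigF m :=
  fun u v hu hv huv => h u v hu hv (lt_of_lt_of_le huv hmn)

variable [Fintype α]

theorem hasBasicForm_gc_of_not_eqBot (h : ¬ EqBot φ → HasBF (.gc φ x)) : HasBF (.gc φ x) := by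
  by_cases hφ : EqBot φ
  · exact hasBasicForm_delta.of_deriv
      ((SDeriv.gcC (PropEq.bot_of_eqBot hφ) (.refl x)).trans (.GC2 x))
  · exact h hφ

theorem hasBasicForm_se_of_not_eqBot (h : ¬ EqBot φ → HasBF (.se φ x)) : HasBF (.se φ x) := by
  by_cases hφ : EqBot φ
  · exact hasBasicForm_nex.of_deriv
      ((SDeriv.seC (PropEq.bot_of_eqBot hφ) (.refl x)).trans (.SE2 x))
  · exact h hφ

theorem hasBasicForm_se_delta (φ : Fml α) : HasBF (.se φ (.delta : SPT α Act S)) :=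
  hasBasicForm_se_of_not_eqBot fun hφ => (SBasic.emiDelta hφ).hasBasicForm

theorem HasBasicForm.se (φ : Fml α) (hp : HasBF p) : HasBF (.se φ p) := by
  refine hp.map (.se φ) (.seC (.refl φ)) fun {r} hr => hasBasicForm_se_of_not_eqBot fun hφ => ?_
  refine ⟨.alt (.se φ .delta) r, .alt (.emiDelta hφ) hr, ?_⟩
  exact (SDeriv.seC (.refl φ) ((SDeriv.A1 _ _).trans (.A6 r))).symm.trans
    (SDeriv.SE4 φ .delta r).symm

theorem hasBasicForm_gc_of_basic (φ : Fml α) (hp : SBasic p) : HasBF (.gc φ p) := by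
  induction hp with
  | nex =>
    exact (hasBasicForm_se_delta _).of_deriv
      ((SDeriv.gcC (.refl φ) (SDeriv.SE2 .delta).symm).trans
        ((SDeriv.SE8 φ .bot .delta).trans (.seC (.refl _) (.GC3 φ))))
  | @emiDelta ψ _ =>
    exact (hasBasicForm_se_delta _).of_deriv
      ((SDeriv.SE8 φ ψ .delta).trans (.seC (.refl _) (.GC3 φ)))
  | @gcAct ψ a _ =>
    exact (hasBasicForm_gc_of_not_eqBot fun h => (SBasic.gcAct a h).hasBasicForm).of_deriv
      (.GC6 φ ψ _)
  | @gcSeq ψ a p _ hp _ =>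
    exact (hasBasicForm_gc_of_not_eqBot fun h => (SBasic.gcSeq a h hp).hasBasicForm).of_deriv
      (.GC6 φ ψ _)
  | alt _ _ ihp ihq => exact (ihp.alt ihq).of_deriv (.GC4 φ _ _)

theorem HasBasicForm.gc (φ : Fml α) (hp : HasBF p) : HasBF (.gc φ p) :=
  hp.map (.gc φ) (.gcC (.refl φ)) (hasBasicForm_gc_of_basic φ)

theorem hasBasicForm_seq_of_basic (hp : SBasic p) (hq : SBasic q) : HasBF (.seq p q) := by
  induction hp with
  | nex => exact hasBasicForm_nex.of_deriv (.NE2 q)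
  | @emiDelta ψ _ =>
    exact (hasBasicForm_se_delta ψ).of_deriv
      ((SDeriv.SE5 ψ .delta q).trans (.seC (.refl ψ) (.A7 q)))
  | @gcAct ψ a _ =>
    exact ((hasBasicForm_act_seq a hq.hasBasicForm).gc ψ).of_deriv (SDeriv.GC5 ψ _ q).symm
  | @gcSeq ψ a p _ _ ih =>
    exact ((hasBasicForm_act_seq a ih).gc ψ).of_deriv
      ((SDeriv.GC5 ψ _ q).symm.trans (.gcC (.refl ψ) (.A5 _ p q)))
  | alt _ _ ihp ihq => exact (ihp.alt ihq).of_deriv (.A4 _ _ q)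

theorem HasBasicForm.seq (hp : HasBF p) (hq : HasBF q) : HasBF (.seq p q) :=
  map₂ .seq .seqC hasBasicForm_seq_of_basic hp hq

theorem hasBasicForm_encap_of_basic (H : Set Act) (hp : SBasic p) : HasBF (.encap H p) := by
  induction hp with
  | nex =>
    exact hasBasicForm_nex.of_deriv ((SDeriv.encapC H (SDeriv.SE2 .delta).symm).trans
      ((SDeriv.SE12 H .bot .delta).trans (.SE2 _)))
  | @emiDelta ψ _ =>
    exact (hasBasicForm_se_delta ψ).of_deriv
      ((SDeriv.SE12 H ψ .delta).trans (.seC (.refl ψ) (.D1d H)))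
  | @gcAct ψ a _ => exact ((hasBasicForm_encap_act H a).gc ψ).of_deriv (.GC11 H ψ _)
  | @gcSeq ψ a p _ _ ih =>
    exact (((hasBasicForm_encap_act H a).seq ih).gc ψ).of_deriv
      ((SDeriv.GC11 H ψ _).trans (.gcC (.refl ψ) (.D4 H _ p)))
  | alt _ _ ihp ihq => exact (ihp.alt ihq).of_deriv (.D3 H _ _)

theorem HasBasicForm.encap (H : Set Act) (hp : HasBF p) : HasBF (.encap H p) :=
  hp.map (.encap H) (.encapC H) (hasBasicForm_encap_of_basic H)

theorem hasBasicForm_st_actd (s : S) (a : Option Act) : HasBF (.st s (actd a : SPT α Act S)) :=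
  ((hasBasicForm_actd _).se _).of_deriv (.SO1 a s)

theorem hasBasicForm_st_of_basic (hp : SBasic p) (s : S) : HasBF (.st s p) := by
  induction hp generalizing s with
  | nex =>
    exact hasBasicForm_nex.of_deriv ((SDeriv.stC s (SDeriv.SE2 .delta).symm).trans
      ((SDeriv.SO5 s .bot .delta).trans (.SE2 _)))
  | @emiDelta ψ _ => exact ((hasBasicForm_st_actd s none).se ψ).of_deriv (.SO5 s ψ .delta)
  | @gcAct ψ a _ =>
    exact (((hasBasicForm_st_actd s (some a)).gc ψ).se _).of_deriv (.SO4 s ψ _)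
  | @gcSeq ψ a p _ _ ih =>
    have hst : HasBF (.st s (.seq (actd (some a)) p)) :=
      (((hasBasicForm_actd _).seq (ih _)).se _).of_deriv (.SO2 (some a) s p)
    exact ((hst.gc ψ).se _).of_deriv (.SO4 s ψ _)
  | alt _ _ ihp ihq => exact ((ihp s).alt (ihq s)).of_deriv (.SO3 s _ _)

theorem HasBasicForm.st (s : S) (hp : HasBF p) : HasBF (.st s p) :=
  hp.map (.st s) (.stC s) fun hr => hasBasicForm_st_of_basic hr s

theorem hasBasicForm_lm_actd (a : Option Act) (hq : HasBF q) : HasBF (.lm (actd a) q) :=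
  (((hasBasicForm_actd a).seq hq).alt (hq.encap _)).of_deriv (.CM2S a q)

theorem hasBasicForm_lm_actd_seq (a : Option Act) (hpq : HasBF (.par p q)) (hq : HasBF q) :
    HasBF (.lm (.seq (actd a) p) q) :=
  (((hasBasicForm_actd a).seq hpq).alt (hq.encap _)).of_deriv (.CM3S a p q)

theorem hasBasicForm_cm_of_basic_right (hx : HasBF x) (hq : SBasic q)
    (hact : ∀ b, HasBF (.cm x (actd b)))
    (hseq : ∀ b q', SBasic q' → q'.size < q.size → HasBF (.cm x (.seq (actd b) q'))) :
    HasBF (.cm x q) := by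
  induction hq with
  | nex =>
    exact hasBasicForm_nex.of_deriv ((SDeriv.cmC (.refl x) (SDeriv.SE2 .delta).symm).trans
      ((SDeriv.SE11 .bot x .delta).trans (.SE2 _)))
  | @emiDelta ψ _ => exact ((hact none).se ψ).of_deriv (.SE11 ψ x .delta)
  | @gcAct ψ b _ => exact (((hact (some b)).gc ψ).alt (hx.encap _)).of_deriv (.GC10S ψ x _)
  | @gcSeq ψ b q' _ hq' _ =>
    refine (((hseq (some b) q' hq' ?_).gc ψ).alt (hx.encap _)).of_deriv (.GC10S ψ x _)
    simp only [SPT.size]; omega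
  | alt _ _ ihp ihq =>
    refine ((ihp fun b q' hq' hs => hseq b q' hq' ?_).alt
      (ihq fun b q' hq' hs => hseq b q' hq' ?_)).of_deriv (.CM9 x _ _) <;>
    simp only [SPT.size] <;> omega

theorem hasBasicForm_cm_actd (a : Option Act) (hq : SBasic q) : HasBF (.cm (actd a) q) :=
  hasBasicForm_cm_of_basic_right (hasBasicForm_actd a) hq
    (fun b => (hasBasicForm_actd _).of_deriv (.CF a b))
    fun b q' hq' _ => ((hasBasicForm_actd _).seq hq'.hasBasicForm).of_deriv (.CM6 a b q')

theorem hasBasicForm_cm_actd_seq (a : Option Act) (hp : SBasic p) (hq : SBasic q)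
    (hpar : ∀ q', SBasic q' → q'.size < q.size → HasBF (.par p q')) :
    HasBF (.cm (.seq (actd a) p) q) :=
  hasBasicForm_cm_of_basic_right ((hasBasicForm_actd a).seq hp.hasBasicForm) hq
    (fun b => ((hasBasicForm_actd _).seq hp.hasBasicForm).of_deriv (.CM5 a b p))
    fun b q' hq' hs => ((hasBasicForm_actd _).seq (hpar q' hq' hs)).of_deriv (.CM7 a b p q')

theorem hasBasicForm_lm_of_basic (hp : SBasic p) (hq : SBasic q)
    (hpar : ParBasicBelow γ actF effF sigF (p.size + q.size)) : HasBF (.lm p q) := by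
  induction hp with
  | nex =>
    exact hasBasicForm_nex.of_deriv ((SDeriv.lmC (SDeriv.SE2 .delta).symm (.refl q)).trans
      ((SDeriv.SE9 .bot .delta q).trans (.SE2 _)))
  | @emiDelta ψ _ =>
    exact ((hasBasicForm_lm_actd none hq.hasBasicForm).se ψ).of_deriv (.SE9 ψ .delta q)
  | @gcAct ψ a _ =>
    exact (((hasBasicForm_lm_actd (some a) hq.hasBasicForm).gc ψ).alt
      (hq.hasBasicForm.encap _)).of_deriv (.GC8S ψ _ q)
  | @gcSeq ψ a p' _ hp' _ =>
    have hp'q : HasBF (.par p' q) := hpar p' q hp' hq (by simp only [SPT.size]; omega)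
    exact (((hasBasicForm_lm_actd_seq (some a) hp'q hq.hasBasicForm).gc ψ).alt
      (hq.hasBasicForm.encap _)).of_deriv (.GC8S ψ _ q)
  | alt _ _ ihp ihq =>
    refine ((ihp (hpar.mono ?_)).alt (ihq (hpar.mono ?_))).of_deriv (.CM4 _ _ q) <;>
    simp only [SPT.size] <;> omega

theorem hasBasicForm_cm_of_basic (hp : SBasic p) (hq : SBasic q)
    (hpar : ParBasicBelow γ actF effF sigF (p.size + q.size)) : HasBF (.cm p q) := by
  induction hp with
  | nex =>
    exact hasBasicForm_nex.of_deriv ((SDeriv.cmC (SDeriv.SE2 .delta).symm (.refl q)).trans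
      ((SDeriv.SE10 .bot .delta q).trans (.SE2 _)))
  | @emiDelta ψ _ => exact ((hasBasicForm_cm_actd none hq).se ψ).of_deriv (.SE10 ψ .delta q)
  | @gcAct ψ a _ =>
    exact (((hasBasicForm_cm_actd (some a) hq).gc ψ).alt
      (hq.hasBasicForm.encap _)).of_deriv (.GC9S ψ _ q)
  | @gcSeq ψ a p' _ hp' _ =>
    have hcm : HasBF (.cm (.seq (actd (some a)) p') q) :=
      hasBasicForm_cm_actd_seq (some a) hp' hq fun q' hq' hs =>
        hpar p' q' hp' hq' (by simp only [SPT.size]; omega)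
    exact ((hcm.gc ψ).alt (hq.hasBasicForm.encap _)).of_deriv (.GC9S ψ _ q)
  | alt _ _ ihp ihq =>
    refine ((ihp (hpar.mono ?_)).alt (ihq (hpar.mono ?_))).of_deriv (.CM8 _ _ q) <;>
    simp only [SPT.size] <;> omega

theorem parBasicBelow (n : ℕ) : ParBasicBelow γ actF effF sigF n := by
  induction n with
  | zero => intro u v _ _ h; omega
  | succ n ih =>
    intro u v hu hv huv
    have hpar : ParBasicBelow γ actF effF sigF (u.size + v.size) := ih.mono (by omega)
    have hpar' : ParBasicBelow γ actF effF sigF (v.size + u.size) := by rwa [add_comm]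
    exact (((hasBasicForm_lm_of_basic hu hv hpar).alt (hasBasicForm_lm_of_basic hv hu hpar')).alt
      (hasBasicForm_cm_of_basic hu hv hpar)).of_deriv (.CM1 u v)

theorem HasBasicForm.par (hp : HasBF p) (hq : HasBF q) : HasBF (.par p q) :=
  map₂ .par .parC (fun hu hv => parBasicBelow _ _ _ hu hv (Nat.lt_succ_self _)) hp hq

theorem HasBasicForm.lm (hp : HasBF p) (hq : HasBF q) : HasBF (.lm p q) :=
  map₂ .lm .lmC (fun hu hv => hasBasicForm_lm_of_basic hu hv (parBasicBelow _)) hp hq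

theorem HasBasicForm.cm (hp : HasBF p) (hq : HasBF q) : HasBF (.cm p q) :=
  map₂ .cm .cmC (fun hu hv => hasBasicForm_cm_of_basic hu hv (parBasicBelow _)) hp hq

end Elimination

theorem ctACPpsSO_elimination_general {α Act S : Type} [Fintype α]
    (γ : Option Act → Option Act → Option Act)
    (actF : Option Act → S → Option Act) (effF : Option Act → S → S)
    (sigF : S → Fml α)
    (p : SPT α Act S) :
    ∃ q : SPT α Act S, SBasic q ∧ SDeriv γ actF effF sigF p q := by
  show HasBasicForm γ actF effF sigF p
  induction p with
  | act a => exact hasBasicForm_actd (some a)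
  | delta => exact hasBasicForm_delta
  | nex => exact hasBasicForm_nex
  | alt _ _ ihp ihq => exact ihp.alt ihq
  | seq _ _ ihp ihq => exact ihp.seq ihq
  | gc φ _ ih => exact ih.gc φ
  | se φ _ ih => exact ih.se φ
  | par _ _ ihp ihq => exact ihp.par ihq
  | lm _ _ ihp ihq => exact ihp.lm ihq
  | cm _ _ ihp ihq => exact ihp.cm ihq
  | encap H _ ih => exact ih.encap H
  | st s _ ih => exact ih.st s

/-- Elimination for ctACPps+SO: every closed term is derivably equal to a basic term. -/
theorem ctACPpsSO_elimination {α Act S : Type} [Fintype α] [Fintype Act]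
    (γ : Option Act → Option Act → Option Act)
    (hγcomm : ∀ a b, γ a b = γ b a)
    (hγassoc : ∀ a b c, γ (γ a b) c = γ a (γ b c))
    (hγdelta : ∀ a, γ none a = none)
    (actF : Option Act → S → Option Act) (effF : Option Act → S → S)
    (sigF : S → Fml α)
    (hactdelta : ∀ s, actF none s = none)
    (p : SPT α Act S) :
    ∃ q : SPT α Act S, SBasic q ∧ SDeriv γ actF effF sigF p q :=
  ctACPpsSO_elimination_general γ actF effF sigF p
end

section
/- Bisimulation equivalence is a congruence with respect to the operators of ctACPps+SO: for all closed ctACPps+SO process terms p,q,p′,q′, every proposition φ, every H⊆A, and every state s∈S, if p ↔ q and p′ ↔ q′ then p+p′ ↔ q+q′, p·p′ ↔ q·q′, φ:→p ↔ φ:→q, φ⌃p ↔ φ⌃q, p∥p′ ↔ q∥q′, p⌊⌊p′ ↔ q⌊⌊q′, p|p′ ↔ q|q′, ∂_H(p) ↔ ∂_H(q), and λ_s(p) ↔ λ_s(q). -/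
set_option autoImplicit true
set_option maxHeartbeats 1000000

/-! Bisimilarity is itself a bisimulation, and the closure of a bisimulation under all operators
is again one. Each transition rule builds the step of a compound term from steps of its
components; the simulating side answers these with steps whose labels take the same value under
the valuation at hand, so the conjunctions forming compound labels agree as well, and every side
condition `¬ EqBot (sigS …)` carries over because related terms emit equivalent signals. -/

section Congruence

variable {α Act S : Type}

lemma eval_conj_ne_f {σ : α → V3} {A B : Fml α} :
    eval σ (A.conj B) ≠ .f ↔ eval σ A ≠ .f ∧ eval σ B ≠ .f := by
  simp only [eval]
  cases eval σ A <;> cases eval σ B <;> simp [conjT]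

lemma eval_imp_of_ne_f {σ : α → V3} {A B : Fml α} (h : eval σ A ≠ .f) :
    eval σ (A.imp B) = eval σ B := by
  simp only [eval]
  cases hA : eval σ A <;> simp_all [impT]

lemma eval_conj_congr {σ : α → V3} {φ ψ φ' ψ' : Fml α} (h : eval σ φ' = eval σ φ)
    (h' : eval σ ψ' = eval σ ψ) : eval σ (φ'.conj ψ') = eval σ (φ.conj ψ) := by
  simp only [eval, h, h']

lemma not_eqBot_of_eval_ne_f {σ : α → V3} {A : Fml α} (h : eval σ A ≠ .f) : ¬ EqBot A :=
  fun hA => h (hA σ)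

lemma FEquiv.refl (A : Fml α) : FEquiv A A := fun _ => rfl

lemma FEquiv.not_eqBot {A B : Fml α} (h : FEquiv A B) (hA : ¬ EqBot A) : ¬ EqBot B :=
  fun hB => hA fun σ => (h σ).trans (hB σ)

lemma FEquiv.conj {A B A' B' : Fml α} (h : FEquiv A B) (h' : FEquiv A' B') :
    FEquiv (A.conj A') (B.conj B') := fun σ => by simp only [eval, h σ, h' σ]

lemma FEquiv.imp {A B A' B' : Fml α} (h : FEquiv A B) (h' : FEquiv A' B') :
    FEquiv (A.imp A') (B.imp B') := fun σ => by simp only [eval, h σ, h' σ]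

lemma SOptR.map {R R' : SPT α Act S → SPT α Act S → Prop} {f : SPT α Act S → SPT α Act S}
    (hf : ∀ x y, R x y → R' (f x) (f y)) {o o' : Option (SPT α Act S)} (h : SOptR R o o') :
    SOptR R' (o.map f) (o'.map f) := by
  cases o <;> cases o' <;> first | trivial | exact h.elim | exact hf _ _ h

lemma SOptR.mono {R R' : SPT α Act S → SPT α Act S → Prop} (hR : ∀ x y, R x y → R' x y)
    {o o' : Option (SPT α Act S)} (h : SOptR R o o') : SOptR R' o o' := by
  cases o <;> cases o' <;> first | trivial | exact h.elim | exact hR _ _ h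

variable {γ : Option Act → Option Act → Option Act} {actF : Option Act → S → Option Act}
  {effF : Option Act → S → S} {sigF : S → Fml α} {R C : SPT α Act S → SPT α Act S → Prop}
  {u v u' v' : SPT α Act S}

lemma SSim.mono {R' : SPT α Act S → SPT α Act S → Prop} (hR : ∀ x y, R x y → R' x y)
    (h : SSim γ actF effF sigF R u v) : SSim γ actF effF sigF R' u v :=
  ⟨fun φ a o ht σ hs hφ =>
    let ⟨ψ, o', e, ht', ho⟩ := h.1 φ a o ht σ hs hφ
    ⟨ψ, o', e, ht', ho.mono hR⟩, h.2⟩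

lemma SSim.term (h : SSim γ actF effF sigF C u v) {φ : Fml α} {a : Act} {σ : α → V3}
    (ht : STr γ actF effF sigF u φ a none) (hs : eval σ (sigS sigF u) ≠ .f)
    (hφ : eval σ φ ≠ .f) :
    ∃ ψ, eval σ ψ = eval σ φ ∧ STr γ actF effF sigF v ψ a none := by
  obtain ⟨ψ, o', e, ht', ho⟩ := h.1 φ a none ht σ hs hφ
  cases o' with
  | none => exact ⟨ψ, e, ht'⟩
  | some _ => exact ho.elim

lemma SSim.step (h : SSim γ actF effF sigF C u v) {φ : Fml α} {a : Act} {σ : α → V3}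
    {x : SPT α Act S} (ht : STr γ actF effF sigF u φ a (some x))
    (hs : eval σ (sigS sigF u) ≠ .f) (hφ : eval σ φ ≠ .f) :
    ∃ ψ y, eval σ ψ = eval σ φ ∧ STr γ actF effF sigF v ψ a (some y) ∧ C x y := by
  obtain ⟨ψ, o', e, ht', ho⟩ := h.1 φ a (some x) ht σ hs hφ
  cases o' with
  | none => exact ho.elim
  | some y => exact ⟨ψ, y, e, ht', ho⟩

lemma conj_label_congr {σ : α → V3} {φ ψ φ' ψ' : Fml α} (h : eval σ φ' = eval σ φ)
    (h' : eval σ ψ' = eval σ ψ) (hφψ : eval σ (φ.conj ψ) ≠ .f) :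
    eval σ (φ'.conj ψ') = eval σ (φ.conj ψ) ∧ ¬ EqBot (φ'.conj ψ') :=
  ⟨eval_conj_congr h h', not_eqBot_of_eval_ne_f ((eval_conj_congr h h').trans_ne hφψ)⟩

lemma SSim.alt (hu : SSim γ actF effF sigF C u v) (hu' : SSim γ actF effF sigF C u' v') :
    SSim γ actF effF sigF C (.alt u u') (.alt v v') := by
  refine ⟨fun φ a o ht σ hs hφ => ?_, hu.2.conj hu'.2⟩
  have hsv : ¬ EqBot (sigS sigF (.alt v v')) :=
    (hu.2.conj hu'.2).not_eqBot (not_eqBot_of_eval_ne_f hs)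
  obtain ⟨hsu, hsu'⟩ := eval_conj_ne_f.1 hs
  cases ht with
  | altL _ ht _ =>
    obtain ⟨ψ, o', e, ht', ho⟩ := hu.1 φ a o ht σ hsu hφ
    exact ⟨ψ, o', e, .altL v' ht' hsv, ho⟩
  | altR _ ht _ =>
    obtain ⟨ψ, o', e, ht', ho⟩ := hu'.1 φ a o ht σ hsu' hφ
    exact ⟨ψ, o', e, .altR v ht' hsv, ho⟩

lemma SSim.seq (hsig : ∀ x y, C x y → FEquiv (sigS sigF x) (sigS sigF y))
    (hseq : ∀ {x y x' y'}, C x y → C x' y' → C (.seq x x') (.seq y y'))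
    (hu : SSim γ actF effF sigF C u v) (huv' : C u' v') :
    SSim γ actF effF sigF C (.seq u u') (.seq v v') := by
  refine ⟨fun φ a o ht σ hs hφ => ?_, hu.2⟩
  cases ht with
  | seqT _ ht hs' =>
    obtain ⟨ψ, e, ht'⟩ := hu.term ht hs hφ
    exact ⟨ψ, _, e, .seqT v' ht' ((hsig _ _ huv').not_eqBot hs'), huv'⟩
  | seqS _ ht =>
    obtain ⟨ψ, y, e, ht', hy⟩ := hu.step ht hs hφ
    exact ⟨ψ, _, e, .seqS v' ht', hseq hy huv'⟩

lemma SSim.gc (χ : Fml α) (hu : SSim γ actF effF sigF C u v) :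
    SSim γ actF effF sigF C (.gc χ u) (.gc χ v) := by
  refine ⟨fun φ a o ht σ hs hφ => ?_, (FEquiv.refl χ).imp hu.2⟩
  cases ht with
  | gcR _ ht _ =>
    obtain ⟨hφ₁, hχ⟩ := eval_conj_ne_f.1 hφ
    have hsu : eval σ (sigS sigF u) ≠ .f := (eval_imp_of_ne_f hχ).symm.trans_ne hs
    obtain ⟨ψ, o', e, ht', ho⟩ := hu.1 _ a o ht σ hsu hφ₁
    obtain ⟨e', hne⟩ := conj_label_congr e rfl hφ
    exact ⟨ψ.conj χ, o', e', .gcR χ ht' hne, ho⟩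

lemma SSim.se (χ : Fml α) (hu : SSim γ actF effF sigF C u v) :
    SSim γ actF effF sigF C (.se χ u) (.se χ v) := by
  refine ⟨fun φ a o ht σ hs hφ => ?_, (FEquiv.refl χ).conj hu.2⟩
  cases ht with
  | seR _ ht hs' =>
    obtain ⟨ψ, o', e, ht', ho⟩ := hu.1 φ a o ht σ (eval_conj_ne_f.1 hs).2 hφ
    exact ⟨ψ, o', e, .seR χ ht' (((FEquiv.refl χ).conj hu.2).not_eqBot hs'), ho⟩

lemma SSim.par (hsig : ∀ x y, C x y → FEquiv (sigS sigF x) (sigS sigF y))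
    (hpar : ∀ {x y x' y'}, C x y → C x' y' → C (.par x x') (.par y y'))
    (huv : C u v) (huv' : C u' v')
    (hu : SSim γ actF effF sigF C u v) (hu' : SSim γ actF effF sigF C u' v') :
    SSim γ actF effF sigF C (.par u u') (.par v v') := by
  refine ⟨fun φ a o ht σ hs hφ => ?_, hu.2.conj hu'.2⟩
  have hsv : ¬ EqBot (sigS sigF (.par v v')) :=
    (hu.2.conj hu'.2).not_eqBot (not_eqBot_of_eval_ne_f hs)
  obtain ⟨hsu, hsu'⟩ := eval_conj_ne_f.1 hs
  cases ht with
  | parTL _ ht _ hs' =>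
    obtain ⟨ψ, e, ht'⟩ := hu.term ht hsu hφ
    exact ⟨ψ, _, e, .parTL v' ht' hsv (hu'.2.not_eqBot hs'), huv'⟩
  | parTR _ ht _ hs' =>
    obtain ⟨ψ, e, ht'⟩ := hu'.term ht hsu' hφ
    exact ⟨ψ, _, e, .parTR v ht' hsv (hu.2.not_eqBot hs'), huv⟩
  | parSL _ ht _ hs' =>
    obtain ⟨ψ, y, e, ht', hy⟩ := hu.step ht hsu hφ
    exact ⟨ψ, _, e, .parSL v' ht' hsv (((hsig _ _ hy).conj hu'.2).not_eqBot hs'), hpar hy huv'⟩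
  | parSR _ ht _ hs' =>
    obtain ⟨ψ, y, e, ht', hy⟩ := hu'.step ht hsu' hφ
    exact ⟨ψ, _, e, .parSR v ht' hsv ((hu.2.conj (hsig _ _ hy)).not_eqBot hs'), hpar huv hy⟩
  | parCTT ht₁ ht₂ hγ _ _ =>
    obtain ⟨ψ₁, e₁, ht₁'⟩ := hu.term ht₁ hsu (eval_conj_ne_f.1 hφ).1
    obtain ⟨ψ₂, e₂, ht₂'⟩ := hu'.term ht₂ hsu' (eval_conj_ne_f.1 hφ).2
    obtain ⟨e, hne⟩ := conj_label_congr e₁ e₂ hφ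
    exact ⟨_, _, e, .parCTT ht₁' ht₂' hγ hne hsv, trivial⟩
  | parCTS ht₁ ht₂ hγ _ _ =>
    obtain ⟨ψ₁, e₁, ht₁'⟩ := hu.term ht₁ hsu (eval_conj_ne_f.1 hφ).1
    obtain ⟨ψ₂, y₂, e₂, ht₂', hy₂⟩ := hu'.step ht₂ hsu' (eval_conj_ne_f.1 hφ).2
    obtain ⟨e, hne⟩ := conj_label_congr e₁ e₂ hφ
    exact ⟨_, _, e, .parCTS ht₁' ht₂' hγ hne hsv, hy₂⟩
  | parCST ht₁ ht₂ hγ _ _ =>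
    obtain ⟨ψ₁, y₁, e₁, ht₁', hy₁⟩ := hu.step ht₁ hsu (eval_conj_ne_f.1 hφ).1
    obtain ⟨ψ₂, e₂, ht₂'⟩ := hu'.term ht₂ hsu' (eval_conj_ne_f.1 hφ).2
    obtain ⟨e, hne⟩ := conj_label_congr e₁ e₂ hφ
    exact ⟨_, _, e, .parCST ht₁' ht₂' hγ hne hsv, hy₁⟩
  | parCSS ht₁ ht₂ hγ _ _ hs' =>
    obtain ⟨ψ₁, y₁, e₁, ht₁', hy₁⟩ := hu.step ht₁ hsu (eval_conj_ne_f.1 hφ).1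
    obtain ⟨ψ₂, y₂, e₂, ht₂', hy₂⟩ := hu'.step ht₂ hsu' (eval_conj_ne_f.1 hφ).2
    obtain ⟨e, hne⟩ := conj_label_congr e₁ e₂ hφ
    exact ⟨_, _, e, .parCSS ht₁' ht₂' hγ hne hsv
      (((hsig _ _ hy₁).conj (hsig _ _ hy₂)).not_eqBot hs'), hpar hy₁ hy₂⟩

lemma SSim.lm (hsig : ∀ x y, C x y → FEquiv (sigS sigF x) (sigS sigF y))
    (hpar : ∀ {x y x' y'}, C x y → C x' y' → C (.par x x') (.par y y'))
    (huv' : C u' v') (hu : SSim γ actF effF sigF C u v) (hu' : SSim γ actF effF sigF C u' v') :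
    SSim γ actF effF sigF C (.lm u u') (.lm v v') := by
  refine ⟨fun φ a o ht σ hs hφ => ?_, hu.2.conj hu'.2⟩
  have hsv : ¬ EqBot (sigS sigF (.lm v v')) :=
    (hu.2.conj hu'.2).not_eqBot (not_eqBot_of_eval_ne_f hs)
  cases ht with
  | lmT _ ht _ hs' =>
    obtain ⟨ψ, e, ht'⟩ := hu.term ht (eval_conj_ne_f.1 hs).1 hφ
    exact ⟨ψ, _, e, .lmT v' ht' hsv (hu'.2.not_eqBot hs'), huv'⟩
  | lmS _ ht _ hs' =>
    obtain ⟨ψ, y, e, ht', hy⟩ := hu.step ht (eval_conj_ne_f.1 hs).1 hφ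
    exact ⟨ψ, _, e, .lmS v' ht' hsv (((hsig _ _ hy).conj hu'.2).not_eqBot hs'), hpar hy huv'⟩

lemma SSim.cm (hsig : ∀ x y, C x y → FEquiv (sigS sigF x) (sigS sigF y))
    (hpar : ∀ {x y x' y'}, C x y → C x' y' → C (.par x x') (.par y y'))
    (hu : SSim γ actF effF sigF C u v) (hu' : SSim γ actF effF sigF C u' v') :
    SSim γ actF effF sigF C (.cm u u') (.cm v v') := by
  refine ⟨fun φ a o ht σ hs hφ => ?_, hu.2.conj hu'.2⟩
  have hsv : ¬ EqBot (sigS sigF (.cm v v')) :=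
    (hu.2.conj hu'.2).not_eqBot (not_eqBot_of_eval_ne_f hs)
  obtain ⟨hsu, hsu'⟩ := eval_conj_ne_f.1 hs
  cases ht with
  | cmTT ht₁ ht₂ hγ _ _ =>
    obtain ⟨ψ₁, e₁, ht₁'⟩ := hu.term ht₁ hsu (eval_conj_ne_f.1 hφ).1
    obtain ⟨ψ₂, e₂, ht₂'⟩ := hu'.term ht₂ hsu' (eval_conj_ne_f.1 hφ).2
    obtain ⟨e, hne⟩ := conj_label_congr e₁ e₂ hφ
    exact ⟨_, _, e, .cmTT ht₁' ht₂' hγ hne hsv, trivial⟩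
  | cmTS ht₁ ht₂ hγ _ _ =>
    obtain ⟨ψ₁, e₁, ht₁'⟩ := hu.term ht₁ hsu (eval_conj_ne_f.1 hφ).1
    obtain ⟨ψ₂, y₂, e₂, ht₂', hy₂⟩ := hu'.step ht₂ hsu' (eval_conj_ne_f.1 hφ).2
    obtain ⟨e, hne⟩ := conj_label_congr e₁ e₂ hφ
    exact ⟨_, _, e, .cmTS ht₁' ht₂' hγ hne hsv, hy₂⟩
  | cmST ht₁ ht₂ hγ _ _ =>
    obtain ⟨ψ₁, y₁, e₁, ht₁', hy₁⟩ := hu.step ht₁ hsu (eval_conj_ne_f.1 hφ).1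
    obtain ⟨ψ₂, e₂, ht₂'⟩ := hu'.term ht₂ hsu' (eval_conj_ne_f.1 hφ).2
    obtain ⟨e, hne⟩ := conj_label_congr e₁ e₂ hφ
    exact ⟨_, _, e, .cmST ht₁' ht₂' hγ hne hsv, hy₁⟩
  | cmSS ht₁ ht₂ hγ _ _ hs' =>
    obtain ⟨ψ₁, y₁, e₁, ht₁', hy₁⟩ := hu.step ht₁ hsu (eval_conj_ne_f.1 hφ).1
    obtain ⟨ψ₂, y₂, e₂, ht₂', hy₂⟩ := hu'.step ht₂ hsu' (eval_conj_ne_f.1 hφ).2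
    obtain ⟨e, hne⟩ := conj_label_congr e₁ e₂ hφ
    exact ⟨_, _, e, .cmSS ht₁' ht₂' hγ hne hsv
      (((hsig _ _ hy₁).conj (hsig _ _ hy₂)).not_eqBot hs'), hpar hy₁ hy₂⟩

lemma SSim.encap (H : Set Act) (hencap : ∀ {x y}, C x y → C (.encap H x) (.encap H y))
    (hu : SSim γ actF effF sigF C u v) :
    SSim γ actF effF sigF C (.encap H u) (.encap H v) := by
  refine ⟨fun φ a o ht σ hs hφ => ?_, hu.2⟩
  cases ht with
  | encapR _ ht ha =>
    obtain ⟨ψ, o', e, ht', ho⟩ := hu.1 _ _ _ ht σ hs hφ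
    exact ⟨ψ, _, e, .encapR H ht' ha, ho.map (f := .encap H) fun _ _ => hencap⟩

lemma SSim.st (s : S) (hsig : ∀ x y, C x y → FEquiv (sigS sigF x) (sigS sigF y))
    (hst : ∀ {s x y}, C x y → C (.st s x) (.st s y)) (hu : SSim γ actF effF sigF C u v) :
    SSim γ actF effF sigF C (.st s u) (.st s v) := by
  refine ⟨fun φ a o ht σ hs hφ => ?_, hu.2.conj (FEquiv.refl _)⟩
  have hsv : ¬ EqBot (sigS sigF (.st s v)) :=
    (hu.2.conj (FEquiv.refl _)).not_eqBot (not_eqBot_of_eval_ne_f hs)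
  cases ht with
  | stT _ ht hact _ =>
    obtain ⟨ψ, e, ht'⟩ := hu.term ht (eval_conj_ne_f.1 hs).1 hφ
    exact ⟨ψ, none, e, .stT s ht' hact hsv, trivial⟩
  | stS _ ht hact _ hs' =>
    obtain ⟨ψ, y, e, ht', hy⟩ := hu.step ht (eval_conj_ne_f.1 hs).1 hφ
    exact ⟨ψ, _, e, .stS s ht' hact hsv (((hsig _ _ hy).conj (FEquiv.refl _)).not_eqBot hs'),
      hst hy⟩

inductive CongClosure (R : SPT α Act S → SPT α Act S → Prop) : SPT α Act S → SPT α Act S → Prop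
  | base {u v : SPT α Act S} : R u v → CongClosure R u v
  | alt {u v u' v' : SPT α Act S} : CongClosure R u v → CongClosure R u' v' →
      CongClosure R (.alt u u') (.alt v v')
  | seq {u v u' v' : SPT α Act S} : CongClosure R u v → CongClosure R u' v' →
      CongClosure R (.seq u u') (.seq v v')
  | gc (φ : Fml α) {u v : SPT α Act S} : CongClosure R u v → CongClosure R (.gc φ u) (.gc φ v)
  | se (φ : Fml α) {u v : SPT α Act S} : CongClosure R u v → CongClosure R (.se φ u) (.se φ v)
  | par {u v u' v' : SPT α Act S} : CongClosure R u v → CongClosure R u' v' →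
      CongClosure R (.par u u') (.par v v')
  | lm {u v u' v' : SPT α Act S} : CongClosure R u v → CongClosure R u' v' →
      CongClosure R (.lm u u') (.lm v v')
  | cm {u v u' v' : SPT α Act S} : CongClosure R u v → CongClosure R u' v' →
      CongClosure R (.cm u u') (.cm v v')
  | encap (H : Set Act) {u v : SPT α Act S} : CongClosure R u v →
      CongClosure R (.encap H u) (.encap H v)
  | st (s : S) {u v : SPT α Act S} : CongClosure R u v → CongClosure R (.st s u) (.st s v)

lemma CongClosure.flip (h : CongClosure R u v) : CongClosure (fun x y => R y x) v u := by
  induction h with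
  | base h => exact .base h
  | alt _ _ ih ih' => exact .alt ih ih'
  | seq _ _ ih ih' => exact .seq ih ih'
  | gc φ _ ih => exact .gc φ ih
  | se φ _ ih => exact .se φ ih
  | par _ _ ih ih' => exact .par ih ih'
  | lm _ _ ih ih' => exact .lm ih ih'
  | cm _ _ ih ih' => exact .cm ih ih'
  | encap H _ ih => exact .encap H ih
  | st s _ ih => exact .st s ih

lemma CongClosure.fequiv_sigS (hR : ∀ x y, R x y → FEquiv (sigS sigF x) (sigS sigF y))
    (h : CongClosure R u v) : FEquiv (sigS sigF u) (sigS sigF v) := by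
  induction h with
  | base h => exact hR _ _ h
  | alt _ _ ih ih' | par _ _ ih ih' | lm _ _ ih ih' | cm _ _ ih ih' => exact ih.conj ih'
  | seq _ _ ih _ | encap _ _ ih => exact ih
  | gc φ _ ih => exact (FEquiv.refl φ).imp ih
  | se φ _ ih => exact (FEquiv.refl φ).conj ih
  | st s _ ih => exact ih.conj (FEquiv.refl (sigF s))

lemma CongClosure.ssim (hR : ∀ x y, R x y → SSim γ actF effF sigF R x y)
    (h : CongClosure R u v) : SSim γ actF effF sigF (CongClosure R) u v := by
  have hsig : ∀ x y, CongClosure R x y → FEquiv (sigS sigF x) (sigS sigF y) :=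
    fun _ _ => CongClosure.fequiv_sigS fun x y hxy => (hR x y hxy).2
  induction h with
  | base h => exact (hR _ _ h).mono fun _ _ => .base
  | alt _ _ ih ih' => exact ih.alt ih'
  | seq _ h' ih _ => exact ih.seq hsig .seq h'
  | gc φ _ ih => exact ih.gc φ
  | se φ _ ih => exact ih.se φ
  | par h h' ih ih' => exact SSim.par hsig .par h h' ih ih'
  | lm _ h' ih ih' => exact SSim.lm hsig .par h' ih ih'
  | cm _ _ ih ih' => exact SSim.cm hsig .par ih ih'
  | encap H _ ih => exact ih.encap H (.encap H)
  | st s _ ih => exact ih.st s hsig (.st _)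

lemma SIsBisim.congClosure (hR : SIsBisim γ actF effF sigF R) :
    SIsBisim γ actF effF sigF (CongClosure R) := fun _ _ h =>
  ⟨h.ssim fun x y hxy => (hR x y hxy).1,
    (h.flip.ssim fun x y hxy => (hR y x hxy).2).mono fun _ _ hxy => hxy.flip⟩

lemma sIsBisim_sBisim : SIsBisim γ actF effF sigF (SBisim γ actF effF sigF) := by
  rintro p q ⟨R, hR, hpq⟩
  exact ⟨(hR p q hpq).1.mono fun _ _ h => ⟨R, hR, h⟩,
    (hR p q hpq).2.mono fun _ _ h => ⟨R, hR, h⟩⟩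

end Congruence

theorem ctACPpsSO_congruence_general {α Act S : Type}
    (γ : Option Act → Option Act → Option Act)
    (actF : Option Act → S → Option Act) (effF : Option Act → S → S)
    (sigF : S → Fml α)
    (p q p' q' : SPT α Act S) (φ : Fml α) (H : Set Act) (s : S)
    (h : SBisim γ actF effF sigF p q) (h' : SBisim γ actF effF sigF p' q') :
    SBisim γ actF effF sigF (.alt p p') (.alt q q') ∧
    SBisim γ actF effF sigF (.seq p p') (.seq q q') ∧
    SBisim γ actF effF sigF (.gc φ p) (.gc φ q) ∧
    SBisim γ actF effF sigF (.se φ p) (.se φ q) ∧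
    SBisim γ actF effF sigF (.par p p') (.par q q') ∧
    SBisim γ actF effF sigF (.lm p p') (.lm q q') ∧
    SBisim γ actF effF sigF (.cm p p') (.cm q q') ∧
    SBisim γ actF effF sigF (.encap H p) (.encap H q) ∧
    SBisim γ actF effF sigF (.st s p) (.st s q) := by
  have hC := (sIsBisim_sBisim (γ := γ) (actF := actF) (effF := effF) (sigF := sigF)).congClosure
  have hb := CongClosure.base h
  have hb' := CongClosure.base h'
  exact ⟨⟨_, hC, .alt hb hb'⟩, ⟨_, hC, .seq hb hb'⟩, ⟨_, hC, .gc φ hb⟩, ⟨_, hC, .se φ hb⟩,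
    ⟨_, hC, .par hb hb'⟩, ⟨_, hC, .lm hb hb'⟩, ⟨_, hC, .cm hb hb'⟩, ⟨_, hC, .encap H hb⟩,
    ⟨_, hC, .st s hb⟩⟩

/-- Bisimulation equivalence is a congruence for the operators of ctACPps+SO. -/
theorem ctACPpsSO_congruence {α Act S : Type} [Fintype α] [Fintype Act]
    (γ : Option Act → Option Act → Option Act)
    (hγcomm : ∀ a b, γ a b = γ b a)
    (hγassoc : ∀ a b c, γ (γ a b) c = γ a (γ b c))
    (hγdelta : ∀ a, γ none a = none)
    (actF : Option Act → S → Option Act) (effF : Option Act → S → S)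
    (sigF : S → Fml α)
    (hactdelta : ∀ s, actF none s = none)
    (p q p' q' : SPT α Act S) (φ : Fml α) (H : Set Act) (s : S)
    (h : SBisim γ actF effF sigF p q) (h' : SBisim γ actF effF sigF p' q') :
    SBisim γ actF effF sigF (.alt p p') (.alt q q') ∧
    SBisim γ actF effF sigF (.seq p p') (.seq q q') ∧
    SBisim γ actF effF sigF (.gc φ p) (.gc φ q) ∧
    SBisim γ actF effF sigF (.se φ p) (.se φ q) ∧
    SBisim γ actF effF sigF (.par p p') (.par q q') ∧
    SBisim γ actF effF sigF (.lm p p') (.lm q q') ∧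
    SBisim γ actF effF sigF (.cm p p') (.cm q q') ∧
    SBisim γ actF effF sigF (.encap H p) (.encap H q) ∧
    SBisim γ actF effF sigF (.st s p) (.st s q) :=
  ctACPpsSO_congruence_general γ actF effF sigF p q p' q' φ H s h h'
end
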